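/- arXiv:1109.0100 — 5 statements merged into one kernel-verified Lean document; each statement's English description precedes it below -/
import Mathlib

section
/- Every nonnegative polynomial V on ℝ^n belongs to the reverse Hölder class B_∞, i.e., there is a constant C (depending on V) such that for every ball B(x,r), the essential supremum of V over B(x,r) is at most C times the average of V over B(x,r). -/
/-!
Polynomials of degree at most `d` form a finite-dimensional space on which
`p ↦ sup_{closedBall 0 1} |p|` and `p ↦ ∫_{ball 0 1} |p|` are both norms (a polynomial vanishing
on an open set is zero), hence equivalent. An affine change of variables carries the unit ball onto
any ball `B(x, r)` without raising the degree, so `sup_B |p| ≤ C ⨍_B |p|` with `C` depending only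
on the dimension and the degree. For a nonnegative `p` this is the `B_∞` condition.
-/

open MeasureTheory Metric Set

section

variable {X W : Type*} [TopologicalSpace X] [T2Space X] [MeasurableSpace X]
  [OpensMeasurableSpace X] {μ : Measure X} [IsFiniteMeasureOnCompacts μ]
  [AddCommGroup W] [Module ℝ W] [FiniteDimensional ℝ W]

theorem exists_abs_le_mul_setIntegral_of_finiteDimensional (F : W →ₗ[ℝ] C(X, ℝ)) {K U : Set X}
    (hK : IsCompact K) (hUK : U ⊆ K) (hF : ∀ w, ⇑(F w) =ᵐ[μ.restrict U] 0 → w = 0) :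
    ∃ C, 0 < C ∧ ∀ w, ∀ y ∈ K, |F w y| ≤ C * ∫ x in U, |F w x| ∂μ := by
  have hF1 : ∀ w, MemLp (F w) 1 (μ.restrict U) := fun w => memLp_one_iff_integrable.2 <|
    ((F w).continuous.continuousOn.integrableOn_compact hK).mono_set hUK
  let S : W →ₗ[ℝ] Lp ℝ 1 (μ.restrict U) :=
    { toFun w := (hF1 w).toLp
      map_add' v w := by simp only [map_add, ContinuousMap.coe_add]; exact (hF1 v).toLp_add (hF1 w)
      map_smul' c w := by
        simp only [map_smul, ContinuousMap.coe_smul]; exact (hF1 w).toLp_const_smul c }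
  have hS : Function.Injective S := by
    refine (injective_iff_map_eq_zero S).2 fun w hw => hF w ?_
    exact (MemLp.coeFn_toLp (hF1 w)).symm.trans ((Lp.eq_zero_iff_ae_eq_zero).1 hw)
  have hSw : ∀ w, ‖S w‖ = ∫ x in U, |F w x| ∂μ := fun w => by
    rw [L1.norm_eq_integral_norm]
    exact integral_congr_ae ((hF1 w).coeFn_toLp.mono fun x hx => by simp [S, hx])
  have : CompactSpace K := isCompact_iff_compactSpace.1 hK
  let T : W →ₗ[ℝ] C(K, ℝ) :=
    { toFun w := (F w).restrict K
      map_add' v w := by ext; simp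
      map_smul' c w := by ext; simp }
  let L := (T ∘ₗ (LinearEquiv.ofInjective S hS).symm.toLinearMap).toContinuousLinearMap
  refine ⟨‖L‖ + 1, by positivity, fun w y hy => ?_⟩
  have hL : L (LinearEquiv.ofInjective S hS w) = T w := by simp [L]
  calc |F w y| = ‖T w ⟨y, hy⟩‖ := rfl
    _ ≤ ‖T w‖ := (T w).norm_coe_le_norm _
    _ ≤ ‖L‖ * ‖S w‖ := hL ▸ L.le_opNorm _
    _ ≤ (‖L‖ + 1) * ∫ x in U, |F w x| ∂μ := by
      rw [hSw]
      exact mul_le_mul_of_nonneg_right (by linarith) (integral_nonneg fun _ => abs_nonneg _)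

end

section

variable {E F : Type*} [NormedAddCommGroup E] [NormedSpace ℝ E] [MeasurableSpace E] [BorelSpace E]
  [FiniteDimensional ℝ E] [NormedAddCommGroup F] [NormedSpace ℝ F]
  (μ : Measure E) [μ.IsAddHaarMeasure]

theorem setAverage_ball_eq_setAverage_comp_affine (f : E → F) (x : E) {r : ℝ} (hr : 0 < r) :
    ⨍ y in ball x r, f y ∂μ = ⨍ z in ball 0 1, f (x + r • z) ∂μ := by
  have htrans : ∫ w in ball 0 r, f (x + w) ∂μ = ∫ y in ball x r, f y ∂μ := by
    simpa [preimage_add_ball] using (measurePreserving_add_left μ x).setIntegral_preimage_emb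
      (measurableEmbedding_addLeft x) f (ball x r)
  have hvol : μ.real (ball x r) = r ^ Module.finrank ℝ E * μ.real (ball 0 1) := by
    simp [measureReal_def, μ.addHaar_ball_of_pos x hr, ENNReal.toReal_ofReal, hr.le]
  rw [setAverage_eq, setAverage_eq,
    Measure.setIntegral_comp_smul_of_pos μ (fun w => f (x + w)) _ hr, smul_unitBall_of_pos hr,
    htrans, hvol, smul_smul]
  congr 1
  field_simp

end

namespace MvPolynomial

variable {ι : Type*} [Fintype ι]

noncomputable def toContinuousMapₗ : MvPolynomial ι ℝ →ₗ[ℝ] C(EuclideanSpace ℝ ι, ℝ) where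
  toFun p := ⟨fun y => eval y p, (continuous_eval p).comp (PiLp.continuous_ofLp 2 _)⟩
  map_add' p q := by ext; simp
  map_smul' c p := by ext; simp

theorem eq_zero_of_eventuallyEq_zero {p : MvPolynomial ι ℝ} {x : EuclideanSpace ℝ ι}
    (h : (fun y : EuclideanSpace ℝ ι => eval y p) =ᶠ[nhds x] 0) : p = 0 := by
  have hp : AnalyticOnNhd ℝ (fun y : EuclideanSpace ℝ ι => eval y p) univ :=
    AnalyticOnNhd.eval_linearMap (WithLp.linearEquiv 2 ℝ (ι → ℝ)).toLinearMap p
  have hzero := hp.eq_of_eventuallyEq analyticOnNhd_const h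
  exact funext fun v => by rw [map_zero]; exact congrFun hzero (WithLp.toLp 2 v)

theorem totalDegree_bind₁_le {σ τ R : Type*} [CommSemiring R] {g : σ → MvPolynomial τ R}
    (hg : ∀ i, (g i).totalDegree ≤ 1) (p : MvPolynomial σ R) :
    (bind₁ g p).totalDegree ≤ p.totalDegree := by
  conv_lhs => rw [p.as_sum, map_sum]
  refine totalDegree_finsetSum_le fun s hs => ?_
  rw [bind₁_monomial]
  refine (totalDegree_mul _ _).trans ?_
  rw [totalDegree_C, zero_add]
  refine (totalDegree_finsetProd _ _).trans (le_trans ?_ (le_totalDegree hs))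
  refine Finset.sum_le_sum fun i _ => (totalDegree_pow _ _).trans ?_
  simpa using Nat.mul_le_mul_left (s i) (hg i)

variable (μ : Measure (EuclideanSpace ℝ ι)) [μ.IsAddHaarMeasure]

theorem exists_abs_eval_le_mul_setIntegral_unitBall (d : ℕ) :
    ∃ C, 0 < C ∧ ∀ p : MvPolynomial ι ℝ, p.totalDegree ≤ d →
      ∀ y ∈ closedBall (0 : EuclideanSpace ℝ ι) 1,
        |eval y p| ≤ C * ∫ z in ball 0 1, |eval z p| ∂μ := by
  obtain ⟨C, hC, hbound⟩ := exists_abs_le_mul_setIntegral_of_finiteDimensional (μ := μ)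
    (toContinuousMapₗ ∘ₗ (restrictTotalDegree ι ℝ d).subtype) (isCompact_closedBall 0 1)
    ball_subset_closedBall fun p hp => by
      have hball := Measure.eqOn_open_of_ae_eq hp isOpen_ball
        (toContinuousMapₗ (p : MvPolynomial ι ℝ)).continuous.continuousOn continuousOn_const
      exact Subtype.ext (eq_zero_of_eventuallyEq_zero
        (Filter.eventually_of_mem (isOpen_ball.mem_nhds (mem_ball_self one_pos)) hball))
  exact ⟨C, hC, fun p hp => hbound ⟨p, (mem_restrictTotalDegree _ _ _).2 hp⟩⟩

theorem exists_abs_eval_le_mul_setAverage (d : ℕ) :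
    ∃ C, 0 < C ∧ ∀ p : MvPolynomial ι ℝ, p.totalDegree ≤ d →
      ∀ (x : EuclideanSpace ℝ ι) (r : ℝ), 0 < r → ∀ y ∈ closedBall x r,
        |eval y p| ≤ C * ⨍ z in ball x r, |eval z p| ∂μ := by
  obtain ⟨A, hA, hbound⟩ := exists_abs_eval_le_mul_setIntegral_unitBall μ d
  refine ⟨A * μ.real (ball 0 1),
    mul_pos hA (ENNReal.toReal_pos (measure_ball_pos μ 0 one_pos).ne' measure_ball_lt_top.ne),
    fun p hp x r hr y hy => ?_⟩
  let g : ι → MvPolynomial ι ℝ := fun i => C (x i) + C r * X i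
  have hg : ∀ i, (g i).totalDegree ≤ 1 := fun i => by
    refine (totalDegree_add _ _).trans (max_le ?_ ?_)
    · simp
    · exact (totalDegree_mul _ _).trans (by simp)
  have heval : ∀ z : EuclideanSpace ℝ ι, eval z (bind₁ g p) = eval (x + r • z) p := fun z => by
    have hcoord : (fun i => eval z (g i)) = ⇑(x + r • z) := by ext i; simp [g]
    rw [eval, eval₂Hom_bind₁]
    exact congrArg (fun v => eval v p) hcoord
  have hz : r⁻¹ • (y - x) ∈ closedBall (0 : EuclideanSpace ℝ ι) 1 := by
    rw [mem_closedBall_zero_iff, norm_smul, norm_inv, Real.norm_of_nonneg hr.le,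
      inv_mul_le_one₀ hr, ← dist_eq_norm]
    exact hy
  calc |eval y p| = |eval (r⁻¹ • (y - x)) (bind₁ g p)| := by
        rw [heval, smul_smul, mul_inv_cancel₀ hr.ne', one_smul, add_sub_cancel]
    _ ≤ A * ∫ z in ball 0 1, |eval z (bind₁ g p)| ∂μ :=
        hbound _ ((totalDegree_bind₁_le hg p).trans hp) _ hz
    _ = A * μ.real (ball 0 1) * ⨍ z in ball x r, |eval z p| ∂μ := by
        simp_rw [heval]
        rw [setAverage_ball_eq_setAverage_comp_affine μ _ x hr, mul_assoc,
          ← smul_eq_mul (a := μ.real _), measure_smul_setAverage _ measure_ball_lt_top.ne]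

end MvPolynomial

/-- Every nonnegative polynomial on `ℝⁿ` belongs to the reverse Hölder class `B_∞`:
its essential sup over any ball is controlled by its average over the ball. -/
theorem stmt_1 {n : ℕ} (P : MvPolynomial (Fin n) ℝ)
    (hP : ∀ x : EuclideanSpace ℝ (Fin n), 0 ≤ MvPolynomial.eval x P) :
    ∃ C : ℝ, 0 < C ∧ ∀ (x : EuclideanSpace ℝ (Fin n)) (r : ℝ), 0 < r →
      essSup (fun y : EuclideanSpace ℝ (Fin n) => ENNReal.ofReal (MvPolynomial.eval y P))
          (volume.restrict (ball x r)) ≤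
        ENNReal.ofReal
          (C * ((volume (ball x r)).toReal⁻¹ * ∫ y in ball x r, MvPolynomial.eval y P)) := by
  obtain ⟨C, hC, hbound⟩ := MvPolynomial.exists_abs_eval_le_mul_setAverage
    (volume : Measure (EuclideanSpace ℝ (Fin n))) P.totalDegree
  refine ⟨C, hC, fun x r hr => essSup_le_of_ae_le _ ?_⟩
  rw [← measureReal_def, ← smul_eq_mul (a := _⁻¹), ← setAverage_eq]
  refine ae_restrict_of_forall_mem measurableSet_ball fun y hy => ENNReal.ofReal_le_ofReal ?_
  simpa only [abs_of_nonneg (hP _)] using hbound P le_rfl x r hr y (ball_subset_closedBall hy)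
end

section
/- Let n ≥ 1, θ > 0 and 0 ≤ γ ≤ θ, and set ρ ≡ 1 (so Ψ(B(x₀,r)) = (1+r)^θ). Then the weight w(x) = (1+|x|)^{−(n+γ)} belongs to A_1^ρ: there is a constant C such that for every ball B = B(x₀,r), (1/((1+r)^θ |B|)) ∫_B w(y) dy ≤ C w(x) for a.e. x ∈ B. -/
/-!
If `1 + ‖y‖` is comparable to `1 + ‖x‖` on the whole ball, which happens when `r ≤ 1` or
`‖x₀‖ ≥ 2r`, the average of `w` over the ball is at most `3^(n+γ) w(x)`, and the factor
`(1+r)^(-θ) ≤ 1` only helps. Otherwise `r > 1` and the ball lies in `B(0, 3r)`. There `w` need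
not be integrable (take `γ = 0`), but it is bounded by `(1+3r)^(θ-γ) (1+‖y‖)^(-(n+θ))`, which is
integrable because `θ > 0`. Dividing by `(1+r)^θ |B| ≥ c (1+3r)^(n+θ)` leaves a multiple of
`(1+3r)^(-(n+γ)) ≤ w(x)`.
-/

open MeasureTheory Metric Set Module

lemma Real.rpow_neg_le_mul_rpow_neg {a b c e : ℝ} (ha : 0 < a) (hc : 0 < c) (hab : a ≤ c * b)
    (he : 0 ≤ e) : b ^ (-e) ≤ c ^ e * a ^ (-e) := by
  have hb : a / c ≤ b := (div_le_iff₀' hc).2 hab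
  calc b ^ (-e) ≤ (a / c) ^ (-e) := Real.rpow_le_rpow_of_nonpos (by positivity) hb (by linarith)
    _ = c ^ e * a ^ (-e) := by
      rw [Real.div_rpow ha.le hc.le, Real.rpow_neg hc.le, div_inv_eq_mul, mul_comm]

lemma one_add_three_mul_rpow_le {r θ : ℝ} (hr : 1 ≤ r) (hθ : 0 ≤ θ) (d : ℕ) :
    (1 + 3 * r) ^ (d + θ) ≤ 4 ^ (d + θ) * ((1 + r) ^ θ * r ^ d) := by
  have hr0 : 0 < r := by linarith
  calc (1 + 3 * r) ^ (d + θ) ≤ (4 * r) ^ (d + θ) :=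
        Real.rpow_le_rpow (by positivity) (by linarith) (by positivity)
    _ = 4 ^ (d + θ) * (r ^ θ * r ^ d) := by
        rw [Real.mul_rpow (by norm_num) hr0.le, Real.rpow_add hr0, Real.rpow_natCast,
          mul_comm (r ^ d)]
    _ ≤ 4 ^ (d + θ) * ((1 + r) ^ θ * r ^ d) := by
        gcongr
        linarith

section Normed

variable {E : Type*} [SeminormedAddCommGroup E]

lemma one_add_norm_le_three_mul_of_mem_ball {x₀ x y : E} {r : ℝ} (hx : x ∈ ball x₀ r)
    (hy : y ∈ ball x₀ r) (hr : r ≤ 1 ∨ 2 * r ≤ ‖x₀‖) : 1 + ‖x‖ ≤ 3 * (1 + ‖y‖) := by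
  rw [mem_ball_iff_norm] at hx hy
  have hx' := norm_sub_norm_le x x₀
  have hy' := norm_sub_norm_le x₀ y
  rw [norm_sub_rev] at hy'
  rcases hr with hr | hr <;> linarith [norm_nonneg y]

lemma ball_subset_closedBall_zero_three_mul {x₀ : E} {r : ℝ} (h : ‖x₀‖ ≤ 2 * r) :
    ball x₀ r ⊆ closedBall 0 (3 * r) := by
  intro y hy
  rw [mem_ball_iff_norm] at hy
  rw [mem_closedBall_zero_iff]
  have := norm_sub_norm_le y x₀
  linarith

end Normed

section Integral

variable {E : Type*} [NormedAddCommGroup E] [MeasurableSpace E] {μ : Measure E} {s : Set E}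

lemma setIntegral_one_add_norm_rpow_neg_le_of_forall_le (hs : μ s < ⊤) {x : E} {c e : ℝ}
    (hc : 0 < c) (he : 0 ≤ e) (hxs : ∀ y ∈ s, 1 + ‖x‖ ≤ c * (1 + ‖y‖)) :
    ∫ y in s, (1 + ‖y‖) ^ (-e) ∂μ ≤ c ^ e * (1 + ‖x‖) ^ (-e) * μ.real s := by
  refine (Real.le_norm_self _).trans (norm_setIntegral_le_of_norm_le_const hs fun y hy => ?_)
  rw [Real.norm_of_nonneg (by positivity)]
  exact Real.rpow_neg_le_mul_rpow_neg (by positivity) hc (hxs y hy) he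

lemma setIntegral_one_add_norm_rpow_neg_le_integral (hs : MeasurableSet s) {R e e' : ℝ}
    (hR : 0 ≤ R) (hee' : e ≤ e') (hsR : s ⊆ closedBall 0 R)
    (hint : Integrable (fun y : E => (1 + ‖y‖) ^ (-e')) μ) :
    ∫ y in s, (1 + ‖y‖) ^ (-e) ∂μ ≤ (1 + R) ^ (e' - e) * ∫ y, (1 + ‖y‖) ^ (-e') ∂μ := by
  have hpt : ∀ y ∈ s, (1 + ‖y‖) ^ (-e) ≤ (1 + R) ^ (e' - e) * (1 + ‖y‖) ^ (-e') := by
    intro y hy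
    have hyR : ‖y‖ ≤ R := mem_closedBall_zero_iff.1 (hsR hy)
    calc (1 + ‖y‖) ^ (-e) = (1 + ‖y‖) ^ (e' - e) * (1 + ‖y‖) ^ (-e') := by
          rw [← Real.rpow_add (by positivity)]; ring_nf
      _ ≤ (1 + R) ^ (e' - e) * (1 + ‖y‖) ^ (-e') := by gcongr
  calc ∫ y in s, (1 + ‖y‖) ^ (-e) ∂μ ≤ ∫ y in s, (1 + R) ^ (e' - e) * (1 + ‖y‖) ^ (-e') ∂μ :=
        integral_mono_of_nonneg (ae_of_all _ fun y => by positivity)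
          (hint.integrableOn.const_mul _) (ae_restrict_of_forall_mem hs hpt)
    _ = (1 + R) ^ (e' - e) * ∫ y in s, (1 + ‖y‖) ^ (-e') ∂μ := integral_const_mul _ _
    _ ≤ (1 + R) ^ (e' - e) * ∫ y, (1 + ‖y‖) ^ (-e') ∂μ :=
        mul_le_mul_of_nonneg_left
          (setIntegral_le_integral hint (ae_of_all _ fun y => by positivity)) (by positivity)

end Integral

lemma measureReal_ball_pos {X : Type*} [PseudoMetricSpace X] [ProperSpace X] [MeasurableSpace X]
    (μ : Measure X) [μ.IsOpenPosMeasure] [IsFiniteMeasureOnCompacts μ] (x₀ : X) {r : ℝ}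
    (hr : 0 < r) : 0 < μ.real (ball x₀ r) :=
  ENNReal.toReal_pos (measure_ball_pos μ x₀ hr).ne' measure_ball_lt_top.ne

lemma average_one_add_norm_rpow_neg_le_of_comparable {E : Type*} [NormedAddCommGroup E]
    [ProperSpace E] [MeasurableSpace E] (μ : Measure E) [μ.IsOpenPosMeasure]
    [IsFiniteMeasureOnCompacts μ] {x₀ x : E} {r θ e : ℝ} (hr : 0 < r)
    (hθ : 0 ≤ θ) (he : 0 ≤ e) (hcomp : ∀ y ∈ ball x₀ r, 1 + ‖x‖ ≤ 3 * (1 + ‖y‖)) :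
    ((1 + r) ^ θ * μ.real (ball x₀ r))⁻¹ * ∫ y in ball x₀ r, (1 + ‖y‖) ^ (-e) ∂μ ≤
      3 ^ e * (1 + ‖x‖) ^ (-e) := by
  have hM := measureReal_ball_pos μ x₀ hr
  have hP : 1 ≤ (1 + r) ^ θ := Real.one_le_rpow (by linarith) hθ
  have hK : 0 ≤ (3 : ℝ) ^ e * (1 + ‖x‖) ^ (-e) := by positivity
  rw [inv_mul_le_iff₀ (by positivity)]
  calc ∫ y in ball x₀ r, (1 + ‖y‖) ^ (-e) ∂μ ≤ 3 ^ e * (1 + ‖x‖) ^ (-e) * μ.real (ball x₀ r) :=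
        setIntegral_one_add_norm_rpow_neg_le_of_forall_le measure_ball_lt_top three_pos he hcomp
    _ ≤ (1 + r) ^ θ * μ.real (ball x₀ r) * (3 ^ e * (1 + ‖x‖) ^ (-e)) := by
        nlinarith [mul_le_mul_of_nonneg_right hP (mul_nonneg hM.le hK)]

section AddHaar

variable {E : Type*} [NormedAddCommGroup E] [NormedSpace ℝ E] [FiniteDimensional ℝ E]
  [MeasurableSpace E] [BorelSpace E] (μ : Measure E) [μ.IsAddHaarMeasure]

lemma addHaar_real_ball_of_pos (x₀ : E) {r : ℝ} (hr : 0 < r) :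
    μ.real (ball x₀ r) = r ^ finrank ℝ E * μ.real (ball 0 1) := by
  rw [measureReal_def, Measure.addHaar_ball_of_pos μ x₀ hr, ENNReal.toReal_mul,
    ENNReal.toReal_ofReal (by positivity), measureReal_def]

lemma average_one_add_norm_rpow_neg_le_of_large {x₀ x : E} {r θ γ : ℝ} (hr : 1 ≤ r)
    (hx₀ : ‖x₀‖ ≤ 2 * r) (hx : x ∈ ball x₀ r) (hθ : 0 < θ) (hγ0 : 0 ≤ γ) (hγθ : γ ≤ θ) :
    ((1 + r) ^ θ * μ.real (ball x₀ r))⁻¹ *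
        ∫ y in ball x₀ r, (1 + ‖y‖) ^ (-(finrank ℝ E + γ)) ∂μ ≤
      4 ^ ((finrank ℝ E : ℝ) + θ) * (∫ y, (1 + ‖y‖) ^ (-(finrank ℝ E + θ)) ∂μ) /
          μ.real (ball (0 : E) 1) * (1 + ‖x‖) ^ (-(finrank ℝ E + γ)) := by
  set d := finrank ℝ E
  set I := ∫ y, (1 + ‖y‖) ^ (-(d + θ)) ∂μ
  set P := (1 + r) ^ θ
  set W := (1 + ‖x‖) ^ (-(d + γ))
  set ρ := 1 + 3 * r
  have hr0 : 0 < r := by linarith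
  have hv := measureReal_ball_pos μ (0 : E) one_pos
  have hsub := ball_subset_closedBall_zero_three_mul hx₀
  have hint : Integrable (fun y : E => (1 + ‖y‖) ^ (-(d + θ))) μ :=
    integrable_one_add_norm (by linarith)
  have hI : 0 ≤ I := integral_nonneg fun y => by positivity
  have hJ : ∫ y in ball x₀ r, (1 + ‖y‖) ^ (-(d + γ)) ∂μ ≤ ρ ^ ((d + θ) - (d + γ)) * I :=
    setIntegral_one_add_norm_rpow_neg_le_integral measurableSet_ball (by positivity)
      (by linarith) hsub hint
  have hsplit : ρ ^ ((d + θ) - (d + γ)) = ρ ^ (d + θ) * ρ ^ (-(d + γ)) := by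
    rw [Real.rpow_sub (by positivity), Real.rpow_neg (by positivity), div_eq_mul_inv]
  have hW : ρ ^ (-(d + γ)) ≤ W :=
    Real.rpow_le_rpow_of_nonpos (by positivity)
      (by linarith [mem_closedBall_zero_iff.1 (hsub hx)]) (by linarith)
  have hρ : ρ ^ ((d : ℝ) + θ) ≤ 4 ^ ((d : ℝ) + θ) * (P * r ^ d) :=
    one_add_three_mul_rpow_le hr hθ.le d
  have hP : 0 < P := by positivity
  rw [hsplit] at hJ
  rw [addHaar_real_ball_of_pos μ x₀ hr0]
  calc (P * (r ^ d * μ.real (ball 0 1)))⁻¹ * ∫ y in ball x₀ r, (1 + ‖y‖) ^ (-(d + γ)) ∂μ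
      ≤ (P * (r ^ d * μ.real (ball 0 1)))⁻¹ * (ρ ^ (d + θ) * ρ ^ (-(d + γ)) * I) := by
        gcongr
    _ ≤ (P * (r ^ d * μ.real (ball 0 1)))⁻¹ * (4 ^ ((d : ℝ) + θ) * (P * r ^ d) * W * I) := by
        gcongr
    _ = 4 ^ ((d : ℝ) + θ) * I / μ.real (ball 0 1) * W := by
        field_simp

theorem exists_average_one_add_norm_rpow_neg_le {θ γ : ℝ} (hθ : 0 < θ) (hγ0 : 0 ≤ γ)
    (hγθ : γ ≤ θ) :
    ∃ C : ℝ, 0 < C ∧ ∀ (x₀ : E) (r : ℝ), 0 < r → ∀ x ∈ ball x₀ r,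
      ((1 + r) ^ θ * μ.real (ball x₀ r))⁻¹ *
          ∫ y in ball x₀ r, (1 + ‖y‖) ^ (-((finrank ℝ E : ℝ) + γ)) ∂μ ≤
        C * (1 + ‖x‖) ^ (-((finrank ℝ E : ℝ) + γ)) := by
  have hv := measureReal_ball_pos μ (0 : E) one_pos
  have hI : 0 ≤ ∫ y, (1 + ‖y‖) ^ (-((finrank ℝ E : ℝ) + θ)) ∂μ :=
    integral_nonneg fun y => by positivity
  refine ⟨max (3 ^ ((finrank ℝ E : ℝ) + γ)) (4 ^ ((finrank ℝ E : ℝ) + θ) *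
    (∫ y, (1 + ‖y‖) ^ (-((finrank ℝ E : ℝ) + θ)) ∂μ) / μ.real (ball (0 : E) 1)),
    by positivity, fun x₀ r hr x hx => ?_⟩
  by_cases h : r ≤ 1 ∨ 2 * r ≤ ‖x₀‖
  · refine (average_one_add_norm_rpow_neg_le_of_comparable μ hr hθ.le (by positivity)
      fun y hy => one_add_norm_le_three_mul_of_mem_ball hx hy h).trans ?_
    gcongr
    exact le_max_left _ _
  · push Not at h
    refine (average_one_add_norm_rpow_neg_le_of_large μ h.1.le h.2.le hx hθ hγ0 hγθ).trans ?_
    gcongr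
    exact le_max_right _ _

end AddHaar

theorem stmt_7_general {n : ℕ} (θ γ : ℝ) (hθ : 0 < θ) (hγ0 : 0 ≤ γ) (hγθ : γ ≤ θ) :
    ∃ C : ℝ, 0 < C ∧ ∀ (x₀ : EuclideanSpace ℝ (Fin n)) (r : ℝ), 0 < r →
      ∀ᵐ x ∂(volume.restrict (ball x₀ r)),
        ((1 + r) ^ θ * (volume (ball x₀ r)).toReal)⁻¹ *
            ∫ y in ball x₀ r, (1 + ‖y‖) ^ (-((n : ℝ) + γ)) ≤
          C * (1 + ‖x‖) ^ (-((n : ℝ) + γ)) := by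
  obtain ⟨C, hC, hbound⟩ := exists_average_one_add_norm_rpow_neg_le
    (volume : Measure (EuclideanSpace ℝ (Fin n))) hθ hγ0 hγθ
  rw [finrank_euclideanSpace_fin] at hbound
  exact ⟨C, hC, fun x₀ r hr => ae_restrict_of_forall_mem measurableSet_ball (hbound x₀ r hr)⟩

/-- With `ρ ≡ 1` (so `Ψ(B(x₀,r)) = (1+r)^θ`), the weight `w(x) = (1+|x|)^{−(n+γ)}`
with `0 ≤ γ ≤ θ` belongs to `A_1^ρ`. -/
theorem stmt_7 {n : ℕ} (hn : 1 ≤ n) (θ γ : ℝ) (hθ : 0 < θ) (hγ0 : 0 ≤ γ) (hγθ : γ ≤ θ) :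
    ∃ C : ℝ, 0 < C ∧ ∀ (x₀ : EuclideanSpace ℝ (Fin n)) (r : ℝ), 0 < r →
      ∀ᵐ x ∂(volume.restrict (ball x₀ r)),
        ((1 + r) ^ θ * (volume (ball x₀ r)).toReal)⁻¹ *
            ∫ y in ball x₀ r, (1 + ‖y‖) ^ (-((n : ℝ) + γ)) ≤
          C * (1 + ‖x‖) ^ (-((n : ℝ) + γ)) :=
  stmt_7_general θ γ hθ hγ0 hγθ
end

section
/- (Weighted weak-type (1,1) endpoint for the L log L maximal function.) Let 2 ≤ η < ∞, w ∈ A_1^ρ, and B(t) = t log(e+t). Then there is C > 0 such that for all t > 0 and all f, w({x ∈ ℝ^n : M_{B,V,η} f(x) > t}) ≤ C ∫_{ℝ^n} (|f(x)|/t)(1 + log⁺(|f(x)|/t)) w(x) dx, where M_{B,V,η} f(x) = sup_{Q ∋ x} Ψ(Q)^{−η} ‖f‖_{B,Q} with ‖·‖_{B,Q} the Luxemburg norm over the cube Q. -/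
open MeasureTheory Metric Set

/-- Luxemburg norm of `f` over `Q` with respect to the Young function `Φ`. -/
noncomputable def luxNorm {n : ℕ} (Φ : ℝ → ℝ) (Q : Set (Fin n → ℝ))
    (f : (Fin n → ℝ) → ℝ) : ℝ :=
  sInf {l : ℝ | 0 < l ∧ (volume Q).toReal⁻¹ * ∫ y in Q, Φ (|f y| / l) ≤ 1}

lemma Bf_nonneg' {s : ℝ} (hs : 0 ≤ s) : 0 ≤ s * Real.log (Real.exp 1 + s) := by
  have he : (1:ℝ) ≤ Real.exp 1 := Real.one_le_exp (by norm_num)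
  exact mul_nonneg hs (Real.log_nonneg (by linarith))

lemma Bf_scale' {s lam : ℝ} (hs : 0 ≤ s) (hlam : 1 ≤ lam) :
    (s / lam) * Real.log (Real.exp 1 + s / lam) ≤ (s * Real.log (Real.exp 1 + s)) / lam := by
  have h0 : (0:ℝ) < lam := lt_of_lt_of_le one_pos hlam
  have he : (0:ℝ) < Real.exp 1 := Real.exp_pos 1
  rw [mul_div_right_comm]
  apply mul_le_mul_of_nonneg_left _ (div_nonneg hs h0.le)
  apply Real.log_le_log (by positivity)
  have : s / lam ≤ s := div_le_self hs hlam
  linarith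

lemma Bf_le2' {s : ℝ} (hs : 0 ≤ s) :
    s * Real.log (Real.exp 1 + s) ≤ 2 * (s * (1 + max (Real.log s) 0)) := by
  have he : (1:ℝ) ≤ Real.exp 1 := Real.one_le_exp (by norm_num)
  have hmax : (0:ℝ) ≤ max (Real.log s) 0 := le_max_right _ _
  have hlog : Real.log (Real.exp 1 + s) ≤ 2 * (1 + max (Real.log s) 0) := by
    have h1 : Real.log (Real.exp 1 + s) ≤ 1 + Real.log (1 + s) := by
      have hb : Real.exp 1 + s ≤ Real.exp 1 * (1 + s) := by nlinarith
      calc Real.log (Real.exp 1 + s) ≤ Real.log (Real.exp 1 * (1 + s)) :=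
            Real.log_le_log (by positivity) hb
        _ = 1 + Real.log (1 + s) := by
            rw [Real.log_mul (by positivity) (by linarith), Real.log_exp]
    have h2 : Real.log (1 + s) ≤ 1 + max (Real.log s) 0 := by
      rcases le_total s 1 with h | h
      · have : Real.log (1 + s) ≤ Real.log 2 := Real.log_le_log (by linarith) (by linarith)
        have h2' : Real.log 2 ≤ 1 := by linarith [Real.log_le_sub_one_of_pos (by norm_num : (0:ℝ) < 2)]
        linarith
      · have h1s : Real.log (1 + s) ≤ Real.log (2 * s) := Real.log_le_log (by linarith) (by linarith)
        rw [Real.log_mul two_ne_zero (by linarith)] at h1s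
        have h2' : Real.log 2 ≤ 1 := by linarith [Real.log_le_sub_one_of_pos (by norm_num : (0:ℝ) < 2)]
        have : Real.log s ≤ max (Real.log s) 0 := le_max_left _ _
        linarith
    linarith
  calc s * Real.log (Real.exp 1 + s) ≤ s * (2 * (1 + max (Real.log s) 0)) :=
        mul_le_mul_of_nonneg_left hlog hs
    _ = 2 * (s * (1 + max (Real.log s) 0)) := by ring

/-- Weighted weak-type `(1,1)` endpoint for the `L log L` maximal operator
`M_{B,V,η} f(x) = sup_{Q ∋ x} Ψ(Q)^{−η} ‖f‖_{B,Q}`, `B(t) = t log(e+t)`,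
for weights `w ∈ A_1^ρ` and `η ≥ 2`. Cubes are sup-metric balls. -/
theorem stmt_16 {n : ℕ} (hn : 1 ≤ n) (ρ : (Fin n → ℝ) → ℝ) (hρ : ∀ x, 0 < ρ x)
    (θ : ℝ) (hθ : 0 < θ) (η : ℝ) (hη : 2 ≤ η)
    (w : (Fin n → ℝ) → ℝ) (hw0 : ∀ x, 0 ≤ w x) (hwloc : LocallyIntegrable w volume)
    (Cw : ℝ) (hCw : 0 < Cw)
    (hA1 : ∀ᵐ x ∂(volume : Measure (Fin n → ℝ)), ∀ (c : Fin n → ℝ) (r : ℝ), 0 < r →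
      x ∈ closedBall c r →
        ((1 + r / ρ c) ^ θ * (volume (closedBall c r)).toReal)⁻¹ *
          ∫ y in closedBall c r, w y ≤ Cw * w x) :
    ∃ C : ℝ, 0 < C ∧ ∀ f : (Fin n → ℝ) → ℝ, Measurable f → ∀ t : ℝ, 0 < t →
      (∫⁻ x in {x | ∃ (c : Fin n → ℝ) (r : ℝ), 0 < r ∧ x ∈ closedBall c r ∧
          t < ((1 + r / ρ c) ^ θ) ^ (-η) *
            luxNorm (fun s => s * Real.log (Real.exp 1 + s)) (closedBall c r) f},
        ENNReal.ofReal (w x)) ≤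
      ENNReal.ofReal C *
        ∫⁻ x, ENNReal.ofReal
          ((|f x| / t) * (1 + max (Real.log (|f x| / t)) 0) * w x) := by
  have h5θ : (0:ℝ) < (5:ℝ) ^ θ := Real.rpow_pos_of_pos (by norm_num) θ
  refine ⟨2 * (Cw * ((5:ℝ) ^ θ * 5 ^ n)), by positivity, ?_⟩
  intro f hf t ht
  set Bfun : ℝ → ℝ := fun s => s * Real.log (Real.exp 1 + s) with hBfun
  set G : (Fin n → ℝ) → ENNReal := fun y => ENNReal.ofReal (Bfun (|f y| / t) * w y) with hG
  set μ : Measure (Fin n → ℝ) := volume.withDensity (fun x => ENNReal.ofReal (w x)) with hμ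
  set μG : Measure (Fin n → ℝ) := volume.withDensity G with hμG
  set I : ENNReal :=
    ∫⁻ x, ENNReal.ofReal ((|f x| / t) * (1 + max (Real.log (|f x| / t)) 0) * w x) with hI
  set D0 : ENNReal := ENNReal.ofReal (Cw * ((5:ℝ) ^ θ * 5 ^ n)) with hD0
  -- the key per-cube estimate
  have key : ∀ (c : Fin n → ℝ) (r : ℝ), 0 < r →
      t < ((1 + r / ρ c) ^ θ) ^ (-η) * luxNorm Bfun (closedBall c r) f →
      μ (closedBall c (5 * r)) ≤ D0 * μG (closedBall c r) := by
    intro c r hr hlt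
    have hρc : 0 < ρ c := hρ c
    have hrρ : (0:ℝ) ≤ r / ρ c := by positivity
    set P1 : ℝ := (1 + r / ρ c) ^ θ with hP1def
    have hP1pos : 0 < P1 := Real.rpow_pos_of_pos (by linarith) θ
    have hP1 : 1 ≤ P1 := Real.one_le_rpow (by linarith) hθ.le
    have hPηpos : 0 < P1 ^ η := Real.rpow_pos_of_pos hP1pos η
    have hP1Pη : P1 ≤ P1 ^ η := by
      calc P1 = P1 ^ (1:ℝ) := (Real.rpow_one P1).symm
        _ ≤ P1 ^ η := Real.rpow_le_rpow_of_exponent_le hP1 (by linarith)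
    have hPη1 : 1 ≤ P1 ^ η := hP1.trans hP1Pη
    set Q1 := closedBall c r with hQ1
    set Q5 := closedBall c (5 * r) with hQ5
    set l : ℝ := t * P1 ^ η with hldef
    have hl0 : 0 < l := mul_pos ht hPηpos
    have hlL : l < luxNorm Bfun Q1 f := by
      have h1 : P1 ^ (-η) = (P1 ^ η)⁻¹ := Real.rpow_neg hP1pos.le η
      rw [h1, ← div_eq_inv_mul] at hlt
      exact (lt_div_iff₀ hPηpos).1 hlt
    have hnotin : ¬ (0 < l ∧ (volume Q1).toReal⁻¹ * ∫ y in Q1, Bfun (|f y| / l) ≤ 1) := by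
      intro hmem
      have hbdd : BddBelow {l : ℝ | 0 < l ∧ (volume Q1).toReal⁻¹ * ∫ y in Q1, Bfun (|f y| / l) ≤ 1} :=
        ⟨0, fun x hx => hx.1.le⟩
      have hle : luxNorm Bfun Q1 f ≤ l := csInf_le hbdd hmem
      linarith
    have hV1 : (volume Q1).toReal = (2 * r) ^ n := by
      rw [hQ1, Real.volume_pi_closedBall c hr.le, ENNReal.toReal_ofReal (by positivity),
        Fintype.card_fin]
    have hV1pos : 0 < (volume Q1).toReal := by rw [hV1]; positivity
    have hQ1ne : volume Q1 ≠ ⊤ := by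
      rw [hQ1, Real.volume_pi_closedBall c hr.le]; exact ENNReal.ofReal_ne_top
    have hVlt : (volume Q1).toReal < ∫ y in Q1, Bfun (|f y| / l) := by
      have h2 : ¬ ((volume Q1).toReal⁻¹ * ∫ y in Q1, Bfun (|f y| / l) ≤ 1) :=
        fun h => hnotin ⟨hl0, h⟩
      push_neg at h2
      rw [← div_eq_inv_mul] at h2
      exact (one_lt_div hV1pos).1 h2
    have hstep1 : volume Q1 < ∫⁻ y in Q1, ENNReal.ofReal (Bfun (|f y| / l)) := by
      have hle : ENNReal.ofReal (∫ y in Q1, Bfun (|f y| / l)) ≤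
          ∫⁻ y in Q1, ENNReal.ofReal (Bfun (|f y| / l)) := by
        by_cases hint : Integrable (fun y => Bfun (|f y| / l)) (volume.restrict Q1)
        · exact le_of_eq (ofReal_integral_eq_lintegral_ofReal hint
            (Filter.Eventually.of_forall fun y =>
              Bf_nonneg' (div_nonneg (abs_nonneg _) hl0.le)))
        · rw [integral_undef hint]; simp
      have h0 : volume Q1 = ENNReal.ofReal (volume Q1).toReal := (ENNReal.ofReal_toReal hQ1ne).symm
      rw [h0]
      exact lt_of_lt_of_le ((ENNReal.ofReal_lt_ofReal_iff (hV1pos.trans hVlt)).2 hVlt) hle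
    have hptw : ∀ y, ENNReal.ofReal (Bfun (|f y| / l)) ≤
        ENNReal.ofReal (Bfun (|f y| / t)) * (ENNReal.ofReal (P1 ^ η))⁻¹ := by
      intro y
      have hd : |f y| / l = (|f y| / t) / (P1 ^ η) := by
        rw [hldef, div_div]
      have hsc := Bf_scale' (s := |f y| / t) (lam := P1 ^ η)
        (div_nonneg (abs_nonneg _) ht.le) hPη1
      calc ENNReal.ofReal (Bfun (|f y| / l))
          ≤ ENNReal.ofReal (Bfun (|f y| / t) / (P1 ^ η)) := by
            rw [hd]; exact ENNReal.ofReal_le_ofReal hsc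
        _ = ENNReal.ofReal (Bfun (|f y| / t)) / ENNReal.ofReal (P1 ^ η) :=
            ENNReal.ofReal_div_of_pos hPηpos
        _ = _ := div_eq_mul_inv _ _
    have hb1 : ENNReal.ofReal (P1 ^ η) * volume Q1 ≤
        ∫⁻ y in Q1, ENNReal.ofReal (Bfun (|f y| / t)) := by
      have h3 : (∫⁻ y in Q1, ENNReal.ofReal (Bfun (|f y| / l))) ≤
          (∫⁻ y in Q1, ENNReal.ofReal (Bfun (|f y| / t))) * (ENNReal.ofReal (P1 ^ η))⁻¹ := by
        refine le_trans (lintegral_mono hptw) ?_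
        exact le_of_eq (lintegral_mul_const' _ _
          (ENNReal.inv_ne_top.2 (ENNReal.ofReal_pos.2 hPηpos).ne'))
      have h4 : volume Q1 < (∫⁻ y in Q1, ENNReal.ofReal (Bfun (|f y| / t))) /
          ENNReal.ofReal (P1 ^ η) := by
        rw [div_eq_mul_inv]; exact lt_of_lt_of_le hstep1 h3
      have h5 := (ENNReal.le_div_iff_mul_le (Or.inl (ENNReal.ofReal_pos.2 hPηpos).ne')
        (Or.inl ENNReal.ofReal_ne_top)).1 h4.le
      rwa [mul_comm] at h5
    have hr5 : (0:ℝ) < 5 * r := by linarith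
    have hQ5V : (volume Q5).toReal = 5 ^ n * (2 * r) ^ n := by
      rw [hQ5, Real.volume_pi_closedBall c hr5.le, ENNReal.toReal_ofReal (by positivity),
        Fintype.card_fin, show (2 * (5 * r)) = 5 * (2 * r) by ring, mul_pow]
    have hP5le : (1 + 5 * r / ρ c) ^ θ ≤ 5 ^ θ * P1 := by
      have hle : 1 + 5 * r / ρ c ≤ 5 * (1 + r / ρ c) := by
        have h55 : 5 * r / ρ c = 5 * (r / ρ c) := by ring
        rw [h55]; linarith
      calc (1 + 5 * r / ρ c) ^ θ ≤ (5 * (1 + r / ρ c)) ^ θ :=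
            Real.rpow_le_rpow (by positivity) hle hθ.le
        _ = 5 ^ θ * P1 := by rw [Real.mul_rpow (by norm_num) (by linarith), hP1def]
    set K : ℝ := Cw * ((5:ℝ) ^ θ * 5 ^ n) * (P1 * (volume Q1).toReal) with hK
    have hKpos : 0 < K := by
      rw [hK]
      exact mul_pos (mul_pos hCw (by positivity)) (mul_pos hP1pos hV1pos)
    have hW5nn : (0:ℝ) ≤ ∫ z in Q5, w z := integral_nonneg fun z => hw0 z
    have hae2 : ∀ᵐ y ∂(volume.restrict Q1),
        ENNReal.ofReal (∫ z in Q5, w z) * ENNReal.ofReal (Bfun (|f y| / t)) ≤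
        ENNReal.ofReal K * G y := by
      filter_upwards [ae_restrict_of_ae hA1, ae_restrict_mem measurableSet_closedBall]
        with y hy hyQ
      have h5 := hy c (5 * r) hr5 (closedBall_subset_closedBall (by linarith) hyQ)
      have hP5pos : 0 < (1 + 5 * r / ρ c) ^ θ := Real.rpow_pos_of_pos (by positivity) θ
      have hV5pos : 0 < (volume Q5).toReal := by rw [hQ5V]; positivity
      have hprod : 0 < (1 + 5 * r / ρ c) ^ θ * (volume Q5).toReal := mul_pos hP5pos hV5pos
      have hW5 : (∫ z in Q5, w z) ≤
          (1 + 5 * r / ρ c) ^ θ * (volume Q5).toReal * (Cw * w y) :=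
        (inv_mul_le_iff₀ hprod).1 h5
      have hBnn : 0 ≤ Bfun (|f y| / t) := Bf_nonneg' (div_nonneg (abs_nonneg _) ht.le)
      have hPVle : (1 + 5 * r / ρ c) ^ θ * (volume Q5).toReal ≤
          5 ^ θ * 5 ^ n * (P1 * (volume Q1).toReal) := by
        calc (1 + 5 * r / ρ c) ^ θ * (volume Q5).toReal
            = (1 + 5 * r / ρ c) ^ θ * (5 ^ n * (2 * r) ^ n) := by rw [hQ5V]
          _ ≤ (5 ^ θ * P1) * (5 ^ n * (2 * r) ^ n) :=
              mul_le_mul_of_nonneg_right hP5le (by positivity)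
          _ = 5 ^ θ * 5 ^ n * (P1 * (2 * r) ^ n) := by ring
          _ = 5 ^ θ * 5 ^ n * (P1 * (volume Q1).toReal) := by rw [hV1]
      have hreal : (∫ z in Q5, w z) * Bfun (|f y| / t) ≤ K * (Bfun (|f y| / t) * w y) := by
        calc (∫ z in Q5, w z) * Bfun (|f y| / t)
            ≤ ((1 + 5 * r / ρ c) ^ θ * (volume Q5).toReal * (Cw * w y)) * Bfun (|f y| / t) :=
              mul_le_mul_of_nonneg_right hW5 hBnn
          _ ≤ ((5 ^ θ * 5 ^ n * (P1 * (volume Q1).toReal)) * (Cw * w y)) * Bfun (|f y| / t) := by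
              apply mul_le_mul_of_nonneg_right _ hBnn
              exact mul_le_mul_of_nonneg_right hPVle (mul_nonneg hCw.le (hw0 y))
          _ = K * (Bfun (|f y| / t) * w y) := by rw [hK]; ring
      calc ENNReal.ofReal (∫ z in Q5, w z) * ENNReal.ofReal (Bfun (|f y| / t))
          = ENNReal.ofReal ((∫ z in Q5, w z) * Bfun (|f y| / t)) :=
            (ENNReal.ofReal_mul hW5nn).symm
        _ ≤ ENNReal.ofReal (K * (Bfun (|f y| / t) * w y)) := ENNReal.ofReal_le_ofReal hreal
        _ = ENNReal.ofReal K * G y := by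
            rw [ENNReal.ofReal_mul hKpos.le, hG]
    have hab : ENNReal.ofReal (∫ z in Q5, w z) *
        (∫⁻ y in Q1, ENNReal.ofReal (Bfun (|f y| / t))) ≤
        ENNReal.ofReal K * ∫⁻ y in Q1, G y := by
      calc ENNReal.ofReal (∫ z in Q5, w z) * ∫⁻ y in Q1, ENNReal.ofReal (Bfun (|f y| / t))
          = ∫⁻ y in Q1, ENNReal.ofReal (∫ z in Q5, w z) * ENNReal.ofReal (Bfun (|f y| / t)) :=
            (lintegral_const_mul' _ _ ENNReal.ofReal_ne_top).symm
        _ ≤ ∫⁻ y in Q1, ENNReal.ofReal K * G y := lintegral_mono_ae hae2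
        _ = ENNReal.ofReal K * ∫⁻ y in Q1, G y :=
            lintegral_const_mul' _ _ ENNReal.ofReal_ne_top
    have hwint : IntegrableOn w Q5 volume :=
      hwloc.integrableOn_isCompact (isCompact_closedBall c (5 * r))
    have haW : ∫⁻ x in Q5, ENNReal.ofReal (w x) = ENNReal.ofReal (∫ z in Q5, w z) :=
      (ofReal_integral_eq_lintegral_ofReal hwint (Filter.Eventually.of_forall hw0)).symm
    rw [hμ, hμG, withDensity_apply' _ _, withDensity_apply' _ _, haW]
    set p : ENNReal := ENNReal.ofReal (P1 * (volume Q1).toReal) with hp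
    have hp0 : p ≠ 0 := (ENNReal.ofReal_pos.2 (mul_pos hP1pos hV1pos)).ne'
    have hpt : p ≠ ⊤ := ENNReal.ofReal_ne_top
    rw [← ENNReal.mul_le_mul_iff_left hp0 hpt]
    calc ENNReal.ofReal (∫ z in Q5, w z) * p
        ≤ ENNReal.ofReal (∫ z in Q5, w z) *
          (∫⁻ y in Q1, ENNReal.ofReal (Bfun (|f y| / t))) := by
          apply mul_le_mul_right
          rw [hp, ENNReal.ofReal_mul hP1pos.le, ENNReal.ofReal_toReal hQ1ne]
          refine le_trans ?_ hb1
          exact mul_le_mul_left (ENNReal.ofReal_le_ofReal hP1Pη) _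
      _ ≤ ENNReal.ofReal K * ∫⁻ y in Q1, G y := hab
      _ = D0 * (∫⁻ y in Q1, G y) * p := by
          rw [hK, hD0, hp, ENNReal.ofReal_mul (mul_nonneg hCw.le (by positivity))]
          ring
  -- per truncation-level estimate via Vitali
  set Ek : ℕ → Set (Fin n → ℝ) := fun k =>
    {x | ∃ (c : Fin n → ℝ) (r : ℝ), 0 < r ∧ r ≤ (k:ℝ) ∧ x ∈ closedBall c r ∧
      t < ((1 + r / ρ c) ^ θ) ^ (-η) * luxNorm Bfun (closedBall c r) f} with hEk
  have hJI : μG univ ≤ 2 * I := by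
    have h1 : μG univ = ∫⁻ y, G y := by
      rw [hμG, withDensity_apply' _ univ, Measure.restrict_univ]
    rw [h1, hI]
    have h2 : ∀ y, G y ≤ 2 * ENNReal.ofReal ((|f y| / t) * (1 + max (Real.log (|f y| / t)) 0) * w y) := by
      intro y
      have hs : (0:ℝ) ≤ |f y| / t := by positivity
      have hb : Bfun (|f y| / t) * w y ≤
          2 * ((|f y| / t) * (1 + max (Real.log (|f y| / t)) 0) * w y) := by
        have := mul_le_mul_of_nonneg_right (Bf_le2' hs) (hw0 y)
        calc Bfun (|f y| / t) * w y ≤ 2 * ((|f y| / t) * (1 + max (Real.log (|f y| / t)) 0)) * w y := this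
          _ = 2 * ((|f y| / t) * (1 + max (Real.log (|f y| / t)) 0) * w y) := by ring
      calc G y ≤ ENNReal.ofReal (2 * ((|f y| / t) * (1 + max (Real.log (|f y| / t)) 0) * w y)) :=
            ENNReal.ofReal_le_ofReal hb
        _ = 2 * ENNReal.ofReal ((|f y| / t) * (1 + max (Real.log (|f y| / t)) 0) * w y) := by
            rw [ENNReal.ofReal_mul (by norm_num : (0:ℝ) ≤ 2)]
            norm_num
    calc (∫⁻ y, G y) ≤ ∫⁻ y, 2 * ENNReal.ofReal ((|f y| / t) * (1 + max (Real.log (|f y| / t)) 0) * w y) :=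
          lintegral_mono h2
      _ = 2 * ∫⁻ y, ENNReal.ofReal ((|f y| / t) * (1 + max (Real.log (|f y| / t)) 0) * w y) :=
          lintegral_const_mul' _ _ (by norm_num)
  have hk : ∀ k : ℕ, μ (Ek k) ≤ D0 * (2 * I) := by
    intro k
    set T : Set ((Fin n → ℝ) × ℝ) := {p | (0 < p.2 ∧ p.2 ≤ (k:ℝ)) ∧
      t < ((1 + p.2 / ρ p.1) ^ θ) ^ (-η) * luxNorm Bfun (closedBall p.1 p.2) f} with hT
    obtain ⟨u, huT, hdisj, hcov⟩ :=
      Vitali.exists_disjoint_subfamily_covering_enlargement_closedBall T Prod.fst Prod.snd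
        (k:ℝ) (fun a ha => ha.1.2) 5 (by norm_num)
    have hucnt : u.Countable := by
      apply hdisj.countable_of_nonempty_interior
      intro p hp
      have hp2 : 0 < p.2 := (huT hp).1.1
      exact ⟨p.1, ball_subset_interior_closedBall (mem_ball_self hp2)⟩
    haveI := hucnt.to_subtype
    have hcover : Ek k ⊆ ⋃ (b : ↥u), closedBall (b : (Fin n → ℝ) × ℝ).1 (5 * (b : (Fin n → ℝ) × ℝ).2) := by
      rintro x ⟨c, r, hr, hrk, hx, hlt⟩
      have hcT : ((c, r) : (Fin n → ℝ) × ℝ) ∈ T := ⟨⟨hr, hrk⟩, hlt⟩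
      obtain ⟨b, hb, hsub⟩ := hcov _ hcT
      exact mem_iUnion.2 ⟨⟨b, hb⟩, hsub hx⟩
    have hdisj' : Pairwise fun (b b' : ↥u) =>
        Disjoint (closedBall (b : (Fin n → ℝ) × ℝ).1 (b : (Fin n → ℝ) × ℝ).2)
          (closedBall (b' : (Fin n → ℝ) × ℝ).1 (b' : (Fin n → ℝ) × ℝ).2) := by
      intro b b' hne
      exact hdisj b.2 b'.2 (fun h => hne (Subtype.ext h))
    calc μ (Ek k) ≤ μ (⋃ (b : ↥u), closedBall (b : (Fin n → ℝ) × ℝ).1 (5 * (b : (Fin n → ℝ) × ℝ).2)) :=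
          measure_mono hcover
      _ ≤ ∑' (b : ↥u), μ (closedBall (b : (Fin n → ℝ) × ℝ).1 (5 * (b : (Fin n → ℝ) × ℝ).2)) :=
          measure_iUnion_le _
      _ ≤ ∑' (b : ↥u), D0 * μG (closedBall (b : (Fin n → ℝ) × ℝ).1 (b : (Fin n → ℝ) × ℝ).2) := by
          apply ENNReal.tsum_le_tsum
          intro b
          exact key _ _ (huT b.2).1.1 (huT b.2).2
      _ = D0 * ∑' (b : ↥u), μG (closedBall (b : (Fin n → ℝ) × ℝ).1 (b : (Fin n → ℝ) × ℝ).2) :=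
          ENNReal.tsum_mul_left
      _ = D0 * μG (⋃ (b : ↥u), closedBall (b : (Fin n → ℝ) × ℝ).1 (b : (Fin n → ℝ) × ℝ).2) := by
          rw [measure_iUnion hdisj' (fun b => measurableSet_closedBall)]
      _ ≤ D0 * μG univ := mul_le_mul_right (measure_mono (subset_univ _)) _
      _ ≤ D0 * (2 * I) := mul_le_mul_right hJI _
  -- assemble
  have hEU : {x | ∃ (c : Fin n → ℝ) (r : ℝ), 0 < r ∧ x ∈ closedBall c r ∧
      t < ((1 + r / ρ c) ^ θ) ^ (-η) * luxNorm Bfun (closedBall c r) f} = ⋃ k, Ek k := by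
    ext x
    simp only [hEk, mem_setOf_eq, mem_iUnion]
    constructor
    · rintro ⟨c, r, hr, hx, hlt⟩
      obtain ⟨k, hkr⟩ := exists_nat_ge r
      exact ⟨k, c, r, hr, hkr, hx, hlt⟩
    · rintro ⟨k, c, r, hr, _, hx, hlt⟩
      exact ⟨c, r, hr, hx, hlt⟩
  have hdir : Directed (· ⊆ ·) Ek := by
    apply Monotone.directed_le
    intro a b hab x
    rintro ⟨c, r, hr, hrk, hx, hlt⟩
    exact ⟨c, r, hr, hrk.trans (Nat.cast_le.2 hab), hx, hlt⟩
  calc (∫⁻ x in {x | ∃ (c : Fin n → ℝ) (r : ℝ), 0 < r ∧ x ∈ closedBall c r ∧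
          t < ((1 + r / ρ c) ^ θ) ^ (-η) * luxNorm Bfun (closedBall c r) f},
        ENNReal.ofReal (w x))
      = μ {x | ∃ (c : Fin n → ℝ) (r : ℝ), 0 < r ∧ x ∈ closedBall c r ∧
          t < ((1 + r / ρ c) ^ θ) ^ (-η) * luxNorm Bfun (closedBall c r) f} :=
        (withDensity_apply' _ _).symm
    _ = ⨆ k, μ (Ek k) := by rw [hEU]; exact hdir.measure_iUnion
    _ ≤ D0 * (2 * I) := iSup_le hk
    _ = ENNReal.ofReal (2 * (Cw * ((5:ℝ) ^ θ * 5 ^ n))) * I := by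
        rw [ENNReal.ofReal_mul (by norm_num : (0:ℝ) ≤ 2), ← hD0, ENNReal.ofReal_ofNat]
        ring
end

section
/- Suppose the heat kernel k_t(x,y) of e^{−tL} satisfies 0 ≤ k_t(x,y) ≤ C_N t^{−n/2} e^{−|x−y|²/(5t)} (1 + √t/ρ(x))^{−N} for every N > 0. Fix θ, η > 0 and choose M, N with N > M > n + θη. Then the local part of the maximal semigroup satisfies, for all x and f: sup_{t>0} ∫_{|x−y| < ρ(x)} k_t(x,y)|f(y)| dy ≤ C M_{V,η} f(x), where M_{V,η} f(x) = sup_{B ∋ x}(1/((1+r_B/ρ(x_B))^{θη}|B|)) ∫_B |f|. -/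
open MeasureTheory Metric Set

/-- Pointwise control of the local part of the maximal heat semigroup `sup_{t>0} e^{−tL}`
by the `Ψ^η`-normalized maximal function `M_{V,η}`. -/
theorem stmt_18 {n : ℕ} (hn : 3 ≤ n) (ρ : EuclideanSpace ℝ (Fin n) → ℝ)
    (hρ : ∀ x, 0 < ρ x) (C₀ l₀ : ℝ) (hC₀ : 1 < C₀) (hl₀ : 0 < l₀)
    (hcrit : ∀ x y : EuclideanSpace ℝ (Fin n),
      C₀⁻¹ * (1 + dist x y / ρ x) ^ (-l₀) ≤ ρ y / ρ x ∧
        ρ y / ρ x ≤ C₀ * (1 + dist x y / ρ x) ^ (l₀ / (l₀ + 1)))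
    (θ η : ℝ) (hθ : 0 < θ) (hη : 0 < η)
    (k : ℝ → EuclideanSpace ℝ (Fin n) → EuclideanSpace ℝ (Fin n) → ℝ)
    (hk0 : ∀ t : ℝ, 0 < t → ∀ x y, 0 ≤ k t x y)
    (hker : ∀ N : ℝ, 0 < N → ∃ CN : ℝ, 0 < CN ∧ ∀ t : ℝ, 0 < t →
      ∀ x y : EuclideanSpace ℝ (Fin n),
        k t x y ≤ CN * t ^ (-(n : ℝ) / 2) * Real.exp (-dist x y ^ 2 / (5 * t)) *
          (1 + Real.sqrt t / ρ x) ^ (-N)) :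
    ∃ C : ℝ, 0 < C ∧ ∀ f : EuclideanSpace ℝ (Fin n) → ℝ, LocallyIntegrable f volume →
      ∀ (x : EuclideanSpace ℝ (Fin n)) (K : ℝ), 0 ≤ K →
        (∀ (c : EuclideanSpace ℝ (Fin n)) (r : ℝ), 0 < r → x ∈ ball c r →
          ((1 + r / ρ c) ^ (θ * η) * (volume (ball c r)).toReal)⁻¹ *
            ∫ y in ball c r, |f y| ≤ K) →
        ∀ t : ℝ, 0 < t →
          ∫ y in ball x (ρ x), k t x y * |f y| ≤ C * K := by
  haveI : NeZero n := ⟨by omega⟩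
  obtain ⟨C₁, hC₁, hk⟩ := hker 1 one_pos
  set cn : ℝ := (volume (ball (0 : EuclideanSpace ℝ (Fin n)) 1)).toReal with hcn_def
  have hcn : 0 < cn :=
    ENNReal.toReal_pos (measure_ball_pos volume _ one_pos).ne' measure_ball_lt_top.ne
  have h2p : (0:ℝ) < 2 ^ (θ * η) := Real.rpow_pos_of_pos two_pos _
  set A : ℝ := (n.factorial : ℝ) * 20 ^ n with hA_def
  have hA : 1 ≤ A := by
    have h1 : (1:ℝ) ≤ (n.factorial : ℝ) := by exact_mod_cast n.factorial_pos
    have h2 : (1:ℝ) ≤ 20 ^ n := one_le_pow₀ (by norm_num : (1:ℝ) ≤ 20)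
    nlinarith
  have hApos : 0 < A := lt_of_lt_of_le one_pos hA
  set C₂ : ℝ := C₁ * 2 ^ (θ * η) * cn * A with hC₂_def
  have hC₂ : 0 < C₂ := by positivity
  refine ⟨2 * C₂, by positivity, ?_⟩
  intro f hf x K hK hmax t ht
  have hρx := hρ x
  have hst : 0 < Real.sqrt t := Real.sqrt_pos.mpr ht
  -- kernel bound with N = 1
  have hkb : ∀ y, k t x y ≤ C₁ * t ^ (-(n:ℝ)/2) * Real.exp (-dist x y ^ 2 / (5*t)) := by
    intro y
    have h2 : (1 + Real.sqrt t / ρ x) ^ (-(1:ℝ)) ≤ 1 := by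
      apply Real.rpow_le_one_of_one_le_of_nonpos
      · have : 0 ≤ Real.sqrt t / ρ x := by positivity
        linarith
      · norm_num
    calc k t x y ≤ C₁ * t ^ (-(n:ℝ)/2) * Real.exp (-dist x y ^ 2 / (5*t)) *
          (1 + Real.sqrt t / ρ x) ^ (-(1:ℝ)) := hk t ht x y
      _ ≤ C₁ * t ^ (-(n:ℝ)/2) * Real.exp (-dist x y ^ 2 / (5*t)) * 1 := by
          apply mul_le_mul_of_nonneg_left h2 (by positivity)
      _ = _ := mul_one _
  -- volume of balls
  have hvol : ∀ r : ℝ, 0 ≤ r → (volume (ball x r)).toReal = r ^ n * cn := by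
    intro r hr
    rw [Measure.addHaar_ball volume x hr, ENNReal.toReal_mul,
      ENNReal.toReal_ofReal (by positivity), finrank_euclideanSpace_fin]
  -- consequence of the maximal function bound
  have hmax' : ∀ r : ℝ, 0 < r → r ≤ ρ x →
      ∫ y in ball x r, |f y| ≤ K * (2 ^ (θ*η) * (r ^ n * cn)) := by
    intro r hr hrρ
    have hb := hmax x r hr (mem_ball_self hr)
    have hvpos : 0 < (volume (ball x r)).toReal := by rw [hvol r hr.le]; positivity
    have hbase : (0:ℝ) < 1 + r / ρ x := by positivity
    have hD : 0 < (1 + r / ρ x) ^ (θ*η) * (volume (ball x r)).toReal :=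
      mul_pos (Real.rpow_pos_of_pos hbase _) hvpos
    rw [inv_mul_le_iff₀ hD] at hb
    have h2 : (1 + r / ρ x) ^ (θ*η) ≤ 2 ^ (θ*η) := by
      apply Real.rpow_le_rpow (by positivity) ?_ (by positivity)
      have : r / ρ x ≤ 1 := div_le_one_of_le₀ hrρ hρx.le
      linarith
    calc ∫ y in ball x r, |f y| ≤ (1 + r / ρ x) ^ (θ*η) * (volume (ball x r)).toReal * K := hb
      _ = K * ((1 + r / ρ x) ^ (θ*η) * (r ^ n * cn)) := by rw [hvol r hr.le]; ring
      _ ≤ K * (2 ^ (θ*η) * (r ^ n * cn)) := by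
          apply mul_le_mul_of_nonneg_left ?_ hK
          apply mul_le_mul_of_nonneg_right h2 (by positivity)
  set g : EuclideanSpace ℝ (Fin n) → ℝ := fun y => k t x y * |f y| with hg_def
  show ∫ y in ball x (ρ x), g y ≤ 2 * C₂ * K
  by_cases hint : IntegrableOn g (ball x (ρ x)) volume
  swap
  · rw [integral_undef hint]; positivity
  set r : ℕ → ℝ := fun j => min (2 ^ j * Real.sqrt t) (ρ x) with hr_def
  have hr_pos : ∀ j, 0 < r j := fun j => lt_min (by positivity) hρx
  have hr_le : ∀ j, r j ≤ ρ x := fun j => min_le_right _ _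
  have hr_mono : ∀ j, r j ≤ r (j+1) := by
    intro j
    apply min_le_min _ le_rfl
    have h2 : (2:ℝ)^j ≤ 2^(j+1) := by
      apply pow_le_pow_right₀ (by norm_num) (Nat.le_succ j)
    nlinarith [Real.sqrt_nonneg t]
  have hgint : ∀ s : Set (EuclideanSpace ℝ (Fin n)), s ⊆ ball x (ρ x) →
      IntegrableOn g s volume := fun s hs => hint.mono_set hs
  -- the key per-piece estimate
  have step : ∀ (j : ℕ) (s : Set (EuclideanSpace ℝ (Fin n))), MeasurableSet s →
      s ⊆ ball x (r j) → ∀ E : ℝ, 0 ≤ E →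
      (∀ y ∈ s, Real.exp (-dist x y ^ 2 / (5 * t)) ≤ E) →
      ∫ y in s, g y ≤ C₁ * 2 ^ (θ * η) * cn * (((2:ℝ) ^ j) ^ n * E) * K := by
    intro j s hms hsub E hE hEs
    have hsρ : s ⊆ ball x (ρ x) := hsub.trans (ball_subset_ball (hr_le j))
    have hfint : IntegrableOn (fun y => |f y|) (ball x (r j)) volume := by
      have h := (hf.integrableOn_isCompact (isCompact_closedBall x (r j))).mono_set
        ball_subset_closedBall
      exact h.abs
    have h1 : ∫ y in s, g y ≤ ∫ y in s, (C₁ * t ^ (-(n:ℝ)/2) * E) * |f y| := by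
      apply setIntegral_mono_on (hgint s hsρ) ((hfint.mono_set hsub).const_mul _) hms
      intro y hy
      have h2 : k t x y ≤ C₁ * t ^ (-(n:ℝ)/2) * E :=
        (hkb y).trans (mul_le_mul_of_nonneg_left (hEs y hy) (by positivity))
      exact mul_le_mul_of_nonneg_right h2 (abs_nonneg _)
    have h3 : ∫ y in s, |f y| ≤ ∫ y in ball x (r j), |f y| :=
      setIntegral_mono_set hfint (Filter.Eventually.of_forall fun y => abs_nonneg _)
        (HasSubset.Subset.eventuallyLE hsub)
    have h4 := hmax' (r j) (hr_pos j) (hr_le j)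
    have hrle : (r j) ^ n ≤ (2 ^ j * Real.sqrt t) ^ n :=
      pow_le_pow_left₀ (hr_pos j).le (min_le_left _ _) n
    have hts : t ^ (-(n:ℝ)/2) * (Real.sqrt t) ^ n = 1 := by
      rw [Real.sqrt_eq_rpow, ← Real.rpow_natCast (t ^ ((1:ℝ)/2)) n, ← Real.rpow_mul ht.le,
        ← Real.rpow_add ht]
      have : (-(n:ℝ)/2 + 1/2 * n) = 0 := by ring
      rw [this, Real.rpow_zero]
    have hcpos : (0:ℝ) ≤ C₁ * t ^ (-(n:ℝ)/2) * E := by positivity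
    calc ∫ y in s, g y ≤ ∫ y in s, (C₁ * t ^ (-(n:ℝ)/2) * E) * |f y| := h1
      _ = (C₁ * t ^ (-(n:ℝ)/2) * E) * ∫ y in s, |f y| := integral_const_mul _ _
      _ ≤ (C₁ * t ^ (-(n:ℝ)/2) * E) * ∫ y in ball x (r j), |f y| :=
          mul_le_mul_of_nonneg_left h3 hcpos
      _ ≤ (C₁ * t ^ (-(n:ℝ)/2) * E) * (K * (2 ^ (θ*η) * ((r j) ^ n * cn))) :=
          mul_le_mul_of_nonneg_left h4 hcpos
      _ ≤ (C₁ * t ^ (-(n:ℝ)/2) * E) * (K * (2 ^ (θ*η) * ((2 ^ j * Real.sqrt t) ^ n * cn))) := by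
          apply mul_le_mul_of_nonneg_left ?_ hcpos
          apply mul_le_mul_of_nonneg_left ?_ hK
          apply mul_le_mul_of_nonneg_left ?_ (by positivity)
          exact mul_le_mul_of_nonneg_right hrle hcn.le
      _ = (C₁ * 2 ^ (θ * η) * cn * (((2:ℝ) ^ j) ^ n * E) * K) *
            (t ^ (-(n:ℝ)/2) * (Real.sqrt t) ^ n) := by ring
      _ = C₁ * 2 ^ (θ * η) * cn * (((2:ℝ) ^ j) ^ n * E) * K := by rw [hts, mul_one]
  -- arithmetic: the Gaussian decay beats the geometric growth
  have arith : ∀ j : ℕ, ((2:ℝ)^j)^n * Real.exp (-((4:ℝ)^j/20)) ≤ A * (1/2)^j := by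
    intro j
    have ha : (0:ℝ) ≤ (4:ℝ)^j/20 := by positivity
    have h1 : (((4:ℝ)^j/20) ^ n / n.factorial) ≤ Real.exp ((4:ℝ)^j/20) :=
      Real.pow_div_factorial_le_exp _ ha n
    have hpos : (0:ℝ) < ((4:ℝ)^j/20)^n / n.factorial := by
      have : (0:ℝ) < (4:ℝ)^j/20 := by positivity
      positivity
    have h2 : Real.exp (-((4:ℝ)^j/20)) ≤ (n.factorial : ℝ) * 20^n / ((4:ℝ)^j)^n := by
      rw [Real.exp_neg]
      calc (Real.exp ((4:ℝ)^j/20))⁻¹ ≤ (((4:ℝ)^j/20)^n / n.factorial)⁻¹ :=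
            inv_anti₀ hpos h1
        _ = (n.factorial : ℝ) * 20^n / ((4:ℝ)^j)^n := by
            rw [div_pow]
            field_simp
    have h3 : ((2:ℝ)^j)^n / ((4:ℝ)^j)^n = (1/2:ℝ)^(j*n) := by
      rw [← div_pow, ← div_pow, ← pow_mul]
      norm_num
    have h4 : ((1:ℝ)/2)^(j*n) ≤ (1/2:ℝ)^j := by
      apply pow_le_pow_of_le_one (by norm_num) (by norm_num)
      exact Nat.le_mul_of_pos_right j (by omega)
    calc ((2:ℝ)^j)^n * Real.exp (-((4:ℝ)^j/20))
        ≤ ((2:ℝ)^j)^n * ((n.factorial : ℝ) * 20^n / ((4:ℝ)^j)^n) :=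
          mul_le_mul_of_nonneg_left h2 (by positivity)
      _ = (n.factorial : ℝ) * 20^n * (((2:ℝ)^j)^n / ((4:ℝ)^j)^n) := by ring
      _ = A * ((1:ℝ)/2)^(j*n) := by rw [h3, hA_def]
      _ ≤ A * (1/2:ℝ)^j := mul_le_mul_of_nonneg_left h4 hApos.le
  -- main induction on dyadic scales
  have main : ∀ J : ℕ, ∫ y in ball x (r J), g y ≤ ∑ j ∈ Finset.range (J+1), C₂ * K * (1/2)^j := by
    intro J
    induction J with
    | zero =>
      have h := step 0 (ball x (r 0)) measurableSet_ball (subset_refl _) 1 one_pos.le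
        (fun y _ => Real.exp_le_one_iff.mpr (by
          rw [neg_div]
          exact neg_nonpos.mpr (by positivity)))
      refine h.trans ?_
      have e : ∑ j ∈ Finset.range (0+1), C₂ * K * (1/2:ℝ)^j = C₂ * K := by norm_num
      rw [e, hC₂_def, pow_zero, one_pow, one_mul, mul_one]
      apply mul_le_mul_of_nonneg_right ?_ hK
      exact le_mul_of_one_le_right (by positivity) hA
    | succ J ih =>
      rcases le_or_gt (ρ x) (2^J * Real.sqrt t) with hc | hc
      · have e1 : r J = ρ x := min_eq_right hc
        have e2 : r (J+1) = ρ x := by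
          apply min_eq_right
          refine hc.trans ?_
          have h2 : (2:ℝ)^J ≤ 2^(J+1) := pow_le_pow_right₀ (by norm_num) (Nat.le_succ J)
          nlinarith [Real.sqrt_nonneg t]
        rw [e2, ← e1]
        refine ih.trans ?_
        apply Finset.sum_le_sum_of_subset_of_nonneg
          (Finset.range_subset_range.mpr (by omega))
        intro i _ _
        positivity
      · have e1 : r J = 2^J * Real.sqrt t := min_eq_left hc.le
        have hsub : ball x (r J) ⊆ ball x (r (J+1)) := ball_subset_ball (hr_mono J)
        have hunion : ball x (r (J+1)) = ball x (r J) ∪ (ball x (r (J+1)) \ ball x (r J)) :=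
          (union_diff_cancel hsub).symm
        rw [hunion, setIntegral_union disjoint_sdiff_self_right
          (measurableSet_ball.diff measurableSet_ball)
          (hgint _ (ball_subset_ball (hr_le J)))
          (hgint _ (diff_subset.trans (ball_subset_ball (hr_le (J+1))))),
          Finset.sum_range_succ]
        apply add_le_add ih
        have hEs : ∀ y ∈ ball x (r (J+1)) \ ball x (r J),
            Real.exp (-dist x y ^ 2 / (5 * t)) ≤ Real.exp (-((4:ℝ)^(J+1)/20)) := by
          intro y hy
          apply Real.exp_le_exp.mpr
          have hd : r J ≤ dist x y := by
            have h := hy.2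
            rw [mem_ball, not_lt] at h
            rwa [dist_comm]
          rw [e1] at hd
          have hd2 : (2^J * Real.sqrt t)^2 ≤ dist x y ^ 2 :=
            pow_le_pow_left₀ (by positivity) hd 2
          have hsq : ((2:ℝ)^J * Real.sqrt t)^2 = 4^J * t := by
            rw [mul_pow, Real.sq_sqrt ht.le, ← pow_mul, mul_comm J 2, pow_mul]
            norm_num
          have h5 : (4:ℝ)^(J+1)/20 ≤ dist x y ^ 2 / (5*t) := by
            rw [div_le_div_iff₀ (by norm_num) (by positivity)]
            nlinarith [hd2, hsq, pow_succ (4:ℝ) J, pow_pos (show (0:ℝ) < 4 by norm_num) J]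
          rw [neg_div]
          exact neg_le_neg h5
        have hann := step (J+1) (ball x (r (J+1)) \ ball x (r J))
          (measurableSet_ball.diff measurableSet_ball) diff_subset
          (Real.exp (-((4:ℝ)^(J+1)/20))) (Real.exp_nonneg _) hEs
        refine hann.trans ?_
        have := arith (J+1)
        calc C₁ * 2 ^ (θ * η) * cn *
              (((2:ℝ)^(J+1))^n * Real.exp (-((4:ℝ)^(J+1)/20))) * K
            ≤ C₁ * 2 ^ (θ * η) * cn * (A * (1/2)^(J+1)) * K := by
              apply mul_le_mul_of_nonneg_right ?_ hK
              exact mul_le_mul_of_nonneg_left this (by positivity)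
          _ = C₂ * K * (1/2)^(J+1) := by rw [hC₂_def]; ring
  obtain ⟨J, hJ⟩ := pow_unbounded_of_one_lt (ρ x / Real.sqrt t) (one_lt_two (α := ℝ))
  have hrJ : r J = ρ x := by
    apply min_eq_right
    have := (div_lt_iff₀ hst).mp hJ
    linarith
  calc ∫ y in ball x (ρ x), g y = ∫ y in ball x (r J), g y := by rw [hrJ]
    _ ≤ ∑ j ∈ Finset.range (J+1), C₂ * K * (1/2)^j := main J
    _ = C₂ * K * ∑ j ∈ Finset.range (J+1), ((1:ℝ)/2)^j := by rw [Finset.mul_sum]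
    _ ≤ C₂ * K * 2 := mul_le_mul_of_nonneg_left (sum_geometric_two_le _) (by positivity)
    _ = 2 * C₂ * K := by ring
end

section
/- Let θ > 0, l₀ > 0, and suppose ρ satisfies the critical-radius estimates. For η > 0 set η' = (l₀+1)η. Then the smooth maximal commutator dominates the rough one: M^b_{V,η'} f(x) ≤ C M̃^b_{V,η} f(x) for all x, where M^b_{V,σ} f(x) = sup_{B ∋ x} (1/(Ψ(B)^σ |B|)) ∫_B |b(x)−b(y)||f(y)| dy and M̃^b_{V,η} f(x) = sup_{ε>0} (1 + ε ψ(B(x,ε)))^{−θη} ∫ ε^{−n} φ((x−y)/ε)|b(x)−b(y)||f(y)| dy, with φ a fixed nonnegative smooth bump with φ ≥ c > 0 on the unit ball, and ψ(B(x,ε)) = (1/|B(x,ε)|) ∫_{B(x,ε)} ρ(y)^{−1} dy. -/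
open MeasureTheory Metric Set
open scoped ENNReal

set_option maxHeartbeats 2000000 in
/-- The smooth maximal commutator `M̃^b_{V,η}` dominates the rough maximal commutator
`M^b_{V,η'}` with `η' = (l₀+1)η`, pointwise. Here
`ψ(B(x,ε)) = |B(x,ε)|⁻¹ ∫_{B(x,ε)} ρ(y)⁻¹ dy`. -/
theorem stmt_19 {n : ℕ} (hn : 1 ≤ n) (ρ : EuclideanSpace ℝ (Fin n) → ℝ)
    (hρ : ∀ x, 0 < ρ x) (C₀ l₀ θ : ℝ) (hC₀ : 1 < C₀) (hl₀ : 0 < l₀) (hθ : 0 < θ)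
    (hcrit : ∀ x y : EuclideanSpace ℝ (Fin n),
      C₀⁻¹ * (1 + dist x y / ρ x) ^ (-l₀) ≤ ρ y / ρ x ∧
        ρ y / ρ x ≤ C₀ * (1 + dist x y / ρ x) ^ (l₀ / (l₀ + 1)))
    (η : ℝ) (hη : 0 < η)
    (φ : EuclideanSpace ℝ (Fin n) → ℝ) (hφsmooth : ContDiff ℝ (⊤ : ℕ∞) φ)
    (hφ0 : ∀ y, 0 ≤ φ y) (hφsupp : tsupport φ ⊆ closedBall 0 1)
    (cφ : ℝ) (hcφ : 0 < cφ) (hφlow : ∀ y ∈ ball (0 : EuclideanSpace ℝ (Fin n)) (1 / 2), cφ ≤ φ y)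
    (b f : EuclideanSpace ℝ (Fin n) → ℝ)
    (hb : LocallyIntegrable b volume) (hf : LocallyIntegrable f volume) :
    ∃ C : ℝ, 0 < C ∧ ∀ x : EuclideanSpace ℝ (Fin n),
      (⨆ (c : EuclideanSpace ℝ (Fin n)) (r : ℝ) (_ : 0 < r) (_ : x ∈ ball c r),
        (ENNReal.ofReal ((1 + r / ρ c) ^ (θ * ((l₀ + 1) * η))) * volume (ball c r))⁻¹ *
          ∫⁻ y in ball c r, ENNReal.ofReal (|b x - b y| * |f y|)) ≤
      ENNReal.ofReal C *
        ⨆ (ε : ℝ) (_ : 0 < ε),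
          (ENNReal.ofReal
            ((1 + ε * ((volume (ball x ε)).toReal⁻¹ *
                ∫ z in ball x ε, (ρ z)⁻¹)) ^ (θ * η)))⁻¹ *
            ∫⁻ y, ENNReal.ofReal
              (ε ^ (-(n : ℝ)) * φ ((ε)⁻¹ • (x - y)) * |b x - b y| * |f y|) := by
  have hC₀' : (0:ℝ) < C₀ := lt_trans one_pos hC₀
  have h5 : (0:ℝ) < (5:ℝ) ^ l₀ := Real.rpow_pos_of_pos (by norm_num) _
  have hωpos : 0 < (volume (ball (0 : EuclideanSpace ℝ (Fin n)) 1)).toReal :=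
    ENNReal.toReal_pos (measure_ball_pos volume _ one_pos).ne' measure_ball_lt_top.ne
  set ω : ℝ := (volume (ball (0 : EuclideanSpace ℝ (Fin n)) 1)).toReal with hωdef
  set K : ℝ := 1 + 4 * C₀ * (5:ℝ) ^ l₀ with hKdef
  clear_value ω K
  have hKpos : 0 < K := by nlinarith [mul_pos (mul_pos (by norm_num : (0:ℝ) < 4) hC₀') h5]
  have hKpow : 0 < K ^ (θ * η) := Real.rpow_pos_of_pos hKpos _
  refine ⟨cφ⁻¹ * 4 ^ n * ω⁻¹ * K ^ (θ * η), by positivity, fun x => ?_⟩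
  refine iSup_le fun c => iSup_le fun r => iSup_le fun hr => iSup_le fun hx => ?_
  set ε : ℝ := 4 * r with hεdef
  have hε : 0 < ε := by positivity
  have hρc : 0 < ρ c := hρ c
  set ψ : ℝ := (volume (ball x ε)).toReal⁻¹ * ∫ z in ball x ε, (ρ z)⁻¹ with hψdef
  set A₀ : ℝ := 1 + r / ρ c with hA₀def
  have hrρ0 : 0 ≤ r / ρ c := by positivity
  have hA₀ : 1 ≤ A₀ := by rw [hA₀def]; linarith
  have hA₀pos : 0 < A₀ := lt_of_lt_of_le one_pos hA₀
  set D : ℝ := 1 + 5 * r / ρ c with hDdef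
  have hD1 : 1 ≤ D := by
    rw [hDdef]; have : 0 ≤ 5 * r / ρ c := by positivity
    linarith
  have hDpos : 0 < D := lt_of_lt_of_le one_pos hD1
  set M : ℝ := C₀ * (ρ c)⁻¹ * D ^ l₀ with hMdef
  clear_value ψ M D A₀ ε
  have hDl₀pos : 0 < D ^ l₀ := Real.rpow_pos_of_pos hDpos _
  have hMpos : 0 < M := by rw [hMdef]; positivity
  -- bound the inverse of ρ on the ball `ball x ε`
  have hρinv_le : ∀ z ∈ ball x ε, (ρ z)⁻¹ ≤ M := by
    intro z hz
    have h1 := (hcrit c z).1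
    have hdcx : dist x c < r := mem_ball.mp hx
    have hdxz : dist z x < ε := mem_ball.mp hz
    have hdist : dist c z ≤ 5 * r := by
      calc dist c z ≤ dist c x + dist x z := dist_triangle _ _ _
        _ ≤ r + ε := by
            rw [dist_comm c x, dist_comm x z]; exact add_le_add hdcx.le hdxz.le
        _ = 5 * r := by rw [hεdef]; ring
    have hbase : 1 + dist c z / ρ c ≤ D := by
      rw [hDdef]; have : dist c z / ρ c ≤ 5 * r / ρ c := by gcongr
      linarith
    have hbpos : 0 < 1 + dist c z / ρ c := by positivity
    have hpow : D ^ (-l₀) ≤ (1 + dist c z / ρ c) ^ (-l₀) := by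
      rw [Real.rpow_neg hbpos.le, Real.rpow_neg hDpos.le]
      exact inv_anti₀ (Real.rpow_pos_of_pos hbpos _)
        (Real.rpow_le_rpow hbpos.le hbase hl₀.le)
    have hlow : C₀⁻¹ * D ^ (-l₀) ≤ ρ z / ρ c :=
      le_trans (mul_le_mul_of_nonneg_left hpow (inv_nonneg.2 hC₀'.le)) h1
    have hρz : C₀⁻¹ * D ^ (-l₀) * ρ c ≤ ρ z := (le_div_iff₀ hρc).mp hlow
    have hmpos : 0 < C₀⁻¹ * D ^ (-l₀) * ρ c := by
      have : 0 < D ^ (-l₀) := Real.rpow_pos_of_pos hDpos _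
      positivity
    calc (ρ z)⁻¹ ≤ (C₀⁻¹ * D ^ (-l₀) * ρ c)⁻¹ := inv_anti₀ hmpos hρz
      _ = M := by
          rw [hMdef, Real.rpow_neg hDpos.le, mul_inv, mul_inv, inv_inv, inv_inv]; ring
  have hVpos : 0 < (volume (ball x ε)).toReal :=
    ENNReal.toReal_pos (measure_ball_pos volume _ hε).ne' measure_ball_lt_top.ne
  have hint_ψ : ∫ z in ball x ε, (ρ z)⁻¹ ≤ M * (volume (ball x ε)).toReal := by
    by_cases hI : IntegrableOn (fun z => (ρ z)⁻¹) (ball x ε) volume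
    · calc ∫ z in ball x ε, (ρ z)⁻¹ ≤ ∫ _z in ball x ε, M :=
          setIntegral_mono_on hI (integrableOn_const measure_ball_lt_top.ne)
            measurableSet_ball hρinv_le
        _ = M * (volume (ball x ε)).toReal := by
          rw [setIntegral_const, smul_eq_mul, mul_comm]; rfl
    · rw [integral_undef hI]; positivity
  have hψ0 : 0 ≤ ψ := hψdef ▸ mul_nonneg (inv_nonneg.2 ENNReal.toReal_nonneg)
    (integral_nonneg fun z => inv_nonneg.2 (hρ z).le)
  have hψM : ψ ≤ M := by
    rw [hψdef]
    calc (volume (ball x ε)).toReal⁻¹ * ∫ z in ball x ε, (ρ z)⁻¹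
        ≤ (volume (ball x ε)).toReal⁻¹ * (M * (volume (ball x ε)).toReal) :=
          mul_le_mul_of_nonneg_left hint_ψ (inv_nonneg.2 ENNReal.toReal_nonneg)
      _ = M := by field_simp
  -- the main real inequality
  have hA₀l : 0 < A₀ ^ (l₀ + 1) := Real.rpow_pos_of_pos hA₀pos _
  have h1A : 1 ≤ A₀ ^ (l₀ + 1) := by
    have := Real.rpow_le_rpow (by norm_num : (0:ℝ) ≤ 1) hA₀ (by linarith : (0:ℝ) ≤ l₀ + 1)
    rwa [Real.one_rpow] at this
  have hDle : D ≤ 5 * A₀ := by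
    rw [hDdef, hA₀def]
    have : 5 * r / ρ c = 5 * (r / ρ c) := by ring
    rw [this]; linarith
  have hDl₀ : D ^ l₀ ≤ 5 ^ l₀ * A₀ ^ l₀ := by
    calc D ^ l₀ ≤ (5 * A₀) ^ l₀ := Real.rpow_le_rpow hDpos.le hDle hl₀.le
      _ = 5 ^ l₀ * A₀ ^ l₀ := Real.mul_rpow (by norm_num) hA₀pos.le
  have hP : 1 + ε * ψ ≤ K * A₀ ^ (l₀ + 1) := by
    have h1 : ε * ψ ≤ ε * M := mul_le_mul_of_nonneg_left hψM hε.le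
    have h2 : ε * M = 4 * C₀ * (r / ρ c) * D ^ l₀ := by
      rw [hMdef, hεdef, div_eq_mul_inv]; ring
    have hrA : r / ρ c ≤ A₀ := by rw [hA₀def]; linarith
    have hA₀l₀pos : 0 < A₀ ^ l₀ := Real.rpow_pos_of_pos hA₀pos _
    have h3 : 4 * C₀ * (r / ρ c) * D ^ l₀ ≤ 4 * C₀ * A₀ * (5 ^ l₀ * A₀ ^ l₀) :=
      mul_le_mul (by nlinarith) hDl₀ hDl₀pos.le (by positivity)
    have h4 : 4 * C₀ * A₀ * (5 ^ l₀ * A₀ ^ l₀) = 4 * C₀ * 5 ^ l₀ * A₀ ^ (l₀ + 1) := by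
      rw [Real.rpow_add hA₀pos, Real.rpow_one]; ring
    have h6 : ε * ψ ≤ 4 * C₀ * 5 ^ l₀ * A₀ ^ (l₀ + 1) := by
      calc ε * ψ ≤ ε * M := h1
        _ = 4 * C₀ * (r / ρ c) * D ^ l₀ := h2
        _ ≤ 4 * C₀ * A₀ * (5 ^ l₀ * A₀ ^ l₀) := h3
        _ = 4 * C₀ * 5 ^ l₀ * A₀ ^ (l₀ + 1) := h4
    have hexp : K * A₀ ^ (l₀ + 1) = A₀ ^ (l₀ + 1) + 4 * C₀ * 5 ^ l₀ * A₀ ^ (l₀ + 1) := by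
      rw [hKdef]; ring
    rw [hexp]; linarith
  have hθη : (0:ℝ) ≤ θ * η := by positivity
  have hεψ0 : (0:ℝ) ≤ 1 + ε * ψ := by
    have := mul_nonneg hε.le hψ0; linarith
  have hPpow : (1 + ε * ψ) ^ (θ * η) ≤ K ^ (θ * η) * A₀ ^ (θ * ((l₀ + 1) * η)) := by
    calc (1 + ε * ψ) ^ (θ * η) ≤ (K * A₀ ^ (l₀ + 1)) ^ (θ * η) :=
        Real.rpow_le_rpow hεψ0 hP hθη
      _ = K ^ (θ * η) * (A₀ ^ (l₀ + 1)) ^ (θ * η) := Real.mul_rpow hKpos.le hA₀l.le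
      _ = K ^ (θ * η) * A₀ ^ ((l₀ + 1) * (θ * η)) := by rw [← Real.rpow_mul hA₀pos.le]
      _ = K ^ (θ * η) * A₀ ^ (θ * ((l₀ + 1) * η)) := by
          rw [show (l₀ + 1) * (θ * η) = θ * ((l₀ + 1) * η) from by ring]
  -- the integral bound
  have hεn : (ε:ℝ) ^ (-(n:ℝ)) = ((ε:ℝ) ^ n)⁻¹ := by
    rw [← Real.rpow_natCast ε n, ← Real.rpow_neg hε.le]
  have hεnpos : (0:ℝ) < ε ^ n := by positivity
  have hIbound : (∫⁻ y in ball c r, ENNReal.ofReal (|b x - b y| * |f y|))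
      ≤ ENNReal.ofReal (cφ⁻¹ * ε ^ n) *
        ∫⁻ y, ENNReal.ofReal (ε ^ (-(n:ℝ)) * φ (ε⁻¹ • (x - y)) * |b x - b y| * |f y|) := by
    rw [← lintegral_indicator measurableSet_ball _,
      ← lintegral_const_mul' _ _ ENNReal.ofReal_ne_top]
    refine lintegral_mono fun y => ?_
    by_cases hy : y ∈ ball c r
    · rw [Set.indicator_of_mem hy, ← ENNReal.ofReal_mul (by positivity)]
      refine ENNReal.ofReal_le_ofReal ?_
      have hφy : cφ ≤ φ (ε⁻¹ • (x - y)) := by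
        apply hφlow
        rw [mem_ball_zero_iff, norm_smul, norm_inv, Real.norm_eq_abs, abs_of_pos hε]
        have hxy : ‖x - y‖ < 2 * r := by
          rw [← dist_eq_norm]
          calc dist x y ≤ dist x c + dist c y := dist_triangle _ _ _
            _ < r + r := add_lt_add (mem_ball.mp hx) (mem_ball'.mp hy)
            _ = 2 * r := by ring
        calc ε⁻¹ * ‖x - y‖ < ε⁻¹ * (2 * r) :=
            mul_lt_mul_of_pos_left hxy (inv_pos.2 hε)
          _ = 1 / 2 := by rw [hεdef]; field_simp; ring
      have key1 : 1 ≤ cφ⁻¹ * φ (ε⁻¹ • (x - y)) := by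
        rw [← inv_mul_cancel₀ hcφ.ne']
        exact mul_le_mul_of_nonneg_left hφy (inv_nonneg.2 hcφ.le)
      have heq : cφ⁻¹ * ε ^ n * (ε ^ (-(n:ℝ)) * φ (ε⁻¹ • (x - y)) * |b x - b y| * |f y|)
          = (cφ⁻¹ * φ (ε⁻¹ • (x - y))) * (|b x - b y| * |f y|) := by
        rw [hεn]
        linear_combination cφ⁻¹ * φ (ε⁻¹ • (x - y)) * |b x - b y| * |f y| *
          mul_inv_cancel₀ (ne_of_gt hεnpos)
      rw [heq]
      exact le_mul_of_one_le_left (by positivity) key1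
    · rw [Set.indicator_of_notMem hy]; exact zero_le
  -- volume of the ball
  have hVb : volume (ball c r) = ENNReal.ofReal (r ^ n * ω) := by
    haveI : Nontrivial (EuclideanSpace ℝ (Fin n)) :=
      Module.nontrivial_of_finrank_pos (by rw [finrank_euclideanSpace_fin]; omega)
    rw [Measure.addHaar_ball volume c hr.le, finrank_euclideanSpace_fin,
      ENNReal.ofReal_mul (by positivity), hωdef, ENNReal.ofReal_toReal measure_ball_lt_top.ne]
  -- prefactor comparison
  have hA : (0:ℝ) < A₀ ^ (θ * ((l₀ + 1) * η)) := Real.rpow_pos_of_pos hA₀pos _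
  have hPpos : (0:ℝ) < (1 + ε * ψ) ^ (θ * η) := by
    apply Real.rpow_pos_of_pos
    have := mul_nonneg hε.le hψ0; linarith
  have hpref : (ENNReal.ofReal (A₀ ^ (θ * ((l₀ + 1) * η))) * volume (ball c r))⁻¹ *
      ENNReal.ofReal (cφ⁻¹ * ε ^ n)
      ≤ ENNReal.ofReal (cφ⁻¹ * 4 ^ n * ω⁻¹ * K ^ (θ * η)) *
        (ENNReal.ofReal ((1 + ε * ψ) ^ (θ * η)))⁻¹ := by
    rw [hVb, ← ENNReal.ofReal_mul hA.le, ← ENNReal.ofReal_inv_of_pos (by positivity),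
      ← ENNReal.ofReal_inv_of_pos hPpos, ← ENNReal.ofReal_mul (by positivity),
      ← ENNReal.ofReal_mul (by positivity)]
    refine ENNReal.ofReal_le_ofReal ?_
    have hεn4 : ε ^ n = 4 ^ n * r ^ n := by rw [hεdef, mul_pow]
    have hrn : (0:ℝ) < r ^ n := by positivity
    have hstep : (A₀ ^ (θ * ((l₀ + 1) * η)))⁻¹ ≤ K ^ (θ * η) * ((1 + ε * ψ) ^ (θ * η))⁻¹ := by
      rw [inv_eq_one_div, ← div_eq_mul_inv, div_le_div_iff₀ hA hPpos, one_mul]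
      linarith [hPpow]
    calc (A₀ ^ (θ * ((l₀ + 1) * η)) * (r ^ n * ω))⁻¹ * (cφ⁻¹ * ε ^ n)
        = (cφ⁻¹ * 4 ^ n * ω⁻¹) * (A₀ ^ (θ * ((l₀ + 1) * η)))⁻¹ := by
          rw [hεn4]; field_simp
      _ ≤ (cφ⁻¹ * 4 ^ n * ω⁻¹) * (K ^ (θ * η) * ((1 + ε * ψ) ^ (θ * η))⁻¹) := by
          have h0 : (0:ℝ) ≤ cφ⁻¹ * 4 ^ n * ω⁻¹ := by positivity
          exact mul_le_mul_of_nonneg_left hstep h0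
      _ = cφ⁻¹ * 4 ^ n * ω⁻¹ * K ^ (θ * η) * ((1 + ε * ψ) ^ (θ * η))⁻¹ := by ring
  -- assemble
  calc (ENNReal.ofReal (A₀ ^ (θ * ((l₀ + 1) * η))) * volume (ball c r))⁻¹ *
        ∫⁻ y in ball c r, ENNReal.ofReal (|b x - b y| * |f y|)
      ≤ (ENNReal.ofReal (A₀ ^ (θ * ((l₀ + 1) * η))) * volume (ball c r))⁻¹ *
        (ENNReal.ofReal (cφ⁻¹ * ε ^ n) *
          ∫⁻ y, ENNReal.ofReal (ε ^ (-(n:ℝ)) * φ (ε⁻¹ • (x - y)) * |b x - b y| * |f y|)) :=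
        mul_le_mul_right hIbound _
    _ = ((ENNReal.ofReal (A₀ ^ (θ * ((l₀ + 1) * η))) * volume (ball c r))⁻¹ *
          ENNReal.ofReal (cφ⁻¹ * ε ^ n)) *
          ∫⁻ y, ENNReal.ofReal (ε ^ (-(n:ℝ)) * φ (ε⁻¹ • (x - y)) * |b x - b y| * |f y|) := by
        rw [mul_assoc]
    _ ≤ (ENNReal.ofReal (cφ⁻¹ * 4 ^ n * ω⁻¹ * K ^ (θ * η)) *
          (ENNReal.ofReal ((1 + ε * ψ) ^ (θ * η)))⁻¹) *
          ∫⁻ y, ENNReal.ofReal (ε ^ (-(n:ℝ)) * φ (ε⁻¹ • (x - y)) * |b x - b y| * |f y|) :=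
        mul_le_mul_left hpref _
    _ = ENNReal.ofReal (cφ⁻¹ * 4 ^ n * ω⁻¹ * K ^ (θ * η)) *
          ((ENNReal.ofReal ((1 + ε * ψ) ^ (θ * η)))⁻¹ *
          ∫⁻ y, ENNReal.ofReal (ε ^ (-(n:ℝ)) * φ (ε⁻¹ • (x - y)) * |b x - b y| * |f y|)) := by
        rw [mul_assoc]
    _ ≤ ENNReal.ofReal (cφ⁻¹ * 4 ^ n * ω⁻¹ * K ^ (θ * η)) *
        ⨆ (ε' : ℝ) (_ : 0 < ε'),
          (ENNReal.ofReal ((1 + ε' * ((volume (ball x ε')).toReal⁻¹ *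
              ∫ z in ball x ε', (ρ z)⁻¹)) ^ (θ * η)))⁻¹ *
            ∫⁻ y, ENNReal.ofReal (ε' ^ (-(n : ℝ)) * φ ((ε')⁻¹ • (x - y)) * |b x - b y| * |f y|) := by
        rw [hψdef]
        refine mul_le_mul_right ?_ _
        exact le_iSup₂ (f := fun (ε' : ℝ) (_ : 0 < ε') =>
          (ENNReal.ofReal ((1 + ε' * ((volume (ball x ε')).toReal⁻¹ *
              ∫ z in ball x ε', (ρ z)⁻¹)) ^ (θ * η)))⁻¹ *
            ∫⁻ y, ENNReal.ofReal (ε' ^ (-(n : ℝ)) * φ ((ε')⁻¹ • (x - y)) * |b x - b y| * |f y|))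
          ε hε
end
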